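/- Let 1 ≤ j ≤ i < n and c ≥ 1, and set e = min(c−1, i−j) and α = (1−q)(x_{i+1} + a) if q ≠ 1, α = −1 if q = 1. Then, in H_n, the element T_j T_{j+1} ⋯ T_i · x_i^c − T_j T_{j+1} ⋯ T_{i−1} · x_{i+1}^c · T_i − α · Σ_{s=0}^{e} γ^s · x_{i+1}^{c−s−1} · m_{ij}(s) lies in 𝔪_i H_n. -/

import Mathlib

open Classical

/-- The element `m_{ij}(c)` of the (degenerate) affine Hecke algebra:
`∑_{j ≤ d_1 < ⋯ < d_{i-j-c} ≤ i-1} T_{d_1} ⋯ T_{d_{i-j-c}}` if `c < i - j`, `1` if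
`c = i - j`, and `0` if `c > i - j`. -/
noncomputable def mm {A : Type*} [Ring A] (T : ℕ → A) (i j c : ℕ) : A :=
  if c < i - j then
    ∑ s ∈ (Finset.Icc j (i - 1)).powersetCard (i - j - c),
      ((s.sort (· ≤ ·)).map T).prod
  else if c = i - j then 1 else 0

lemma sort_concat_max {a : ℕ} {s : Finset ℕ} (h1 : ∀ b ∈ s, b ≤ a) (h2 : a ∉ s) :
    (insert a s).sort (· ≤ ·) = s.sort (· ≤ ·) ++ [a] := by
  refine (fun hp hs => List.Perm.eq_of_pairwise' (Finset.pairwise_sort _ _) hs hp) ?_ ?_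
  · rw [← Multiset.coe_eq_coe]
    simp only [Finset.sort_eq, ← Multiset.coe_add]
    rw [Finset.insert_val_of_notMem h2]
    have : (↑[a] : Multiset ℕ) = {a} := rfl
    rw [this, add_comm, Multiset.singleton_add]
  · rw [List.pairwise_append]
    refine ⟨Finset.pairwise_sort _ _, List.pairwise_singleton _ _, ?_⟩
    intro x hx y hy
    simp at hy; subst hy
    exact h1 x ((Finset.mem_sort _).1 hx)

lemma sort_Icc (a b : ℕ) : (Finset.Icc a b).sort (· ≤ ·) = List.range' a (b + 1 - a) := by
  rw [show Finset.Icc a b = (List.range' a (b+1-a)).toFinset by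
    ext m; simp [List.mem_range'_1]; omega]
  rw [List.toFinset_sort]
  · exact (List.pairwise_lt_range' ..).imp le_of_lt
  · exact List.nodup_range' ..


section
variable {A : Type*} [Ring A] (T : ℕ → A)

lemma mm_eq_sum {i j c : ℕ} (h : c ≤ i - j) :
    mm T i j c =
      ∑ s ∈ (Finset.Icc j (i - 1)).powersetCard (i - j - c),
        ((s.sort (· ≤ ·)).map T).prod := by
  rcases lt_or_eq_of_le h with h' | h'
  · rw [mm, if_pos h']
  · rw [mm, if_neg (by omega), if_pos h', ← h', Nat.sub_self,
      Finset.powersetCard_zero, Finset.sum_singleton, Finset.sort_empty]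
    simp

lemma mm_zero {i j : ℕ} (h : j ≤ i) :
    mm T i j 0 = ((List.range' j (i - j)).map T).prod := by
  rw [mm_eq_sum T (by omega), Nat.sub_zero]
  rcases Nat.eq_or_lt_of_le h with h' | h'
  · subst h'
    have : j - j = 0 := by omega
    rw [this, Finset.powersetCard_zero, Finset.sum_singleton, Finset.sort_empty]
    simp
  · have hc : (Finset.Icc j (i-1)).card = i - j := by
      rw [Nat.card_Icc]; omega
    rw [← hc, Finset.powersetCard_self, Finset.sum_singleton, hc, sort_Icc,
      show i - 1 + 1 - j = i - j from by omega]

lemma comm_mm {i j c : ℕ} (z : A)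
    (hz : ∀ l ∈ Finset.Icc j (i-1), Commute z (T l)) : Commute z (mm T i j c) := by
  unfold mm; split
  · apply Commute.sum_right
    intro S hS
    apply Commute.list_prod_right
    intro y hy
    simp only [List.mem_map] at hy
    obtain ⟨l, hl, rfl⟩ := hy
    exact hz l ((Finset.mem_powersetCard.1 hS).1 ((Finset.mem_sort _).1 hl))
  · split
    · exact Commute.one_right z
    · exact Commute.zero_right z

lemma mm_rec {i j m : ℕ} (hj : 1 ≤ j) (hji : j + 1 ≤ i) (hm : 1 ≤ m) :
    mm T i j m = mm T (i-1) j (m-1) + mm T (i-1) j m * T (i-1) := by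
  rcases lt_trichotomy m (i - j) with h | h | h
  · rw [mm_eq_sum T (le_of_lt h), mm_eq_sum T (show m - 1 ≤ i-1-j by omega),
      mm_eq_sum T (show m ≤ i-1-j by omega)]
    have e1 : i - 1 - j - (m-1) = i - j - m - 1 + 1 := by omega
    have e2 : i - 1 - 1 = i - 2 := by omega
    have e3 : i - 1 - j - m = i - j - m - 1 := by omega
    rw [e1, e2, e3]
    have hins : Finset.Icc j (i-1) = insert (i-1) (Finset.Icc j (i-2)) := by
      ext l; simp only [Finset.mem_Icc, Finset.mem_insert]; omega
    have hnm : (i-1) ∉ Finset.Icc j (i-2) := by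
      simp only [Finset.mem_Icc]; omega
    have hsize : i - j - m = (i - j - m - 1) + 1 := by omega
    rw [hins, hsize, Finset.powersetCard_succ_insert hnm, Finset.sum_union ?disj]
    case disj =>
      rw [Finset.disjoint_left]
      intro S hS1 hS2
      obtain ⟨S', hS', rfl⟩ := Finset.mem_image.1 hS2
      exact hnm ((Finset.mem_powersetCard.1 hS1).1 (Finset.mem_insert_self _ _))
    congr 1
    rw [Finset.sum_image ?inj, Finset.sum_mul]
    case inj =>
      intro S1 h1 S2 h2 heq
      have n1 : i - 1 ∉ S1 := fun hx => hnm ((Finset.mem_powersetCard.1 h1).1 hx)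
      have n2 : i - 1 ∉ S2 := fun hx => hnm ((Finset.mem_powersetCard.1 h2).1 hx)
      have := congrArg (fun t => Finset.erase t (i-1)) heq
      simpa [Finset.erase_insert n1, Finset.erase_insert n2] using this
    apply Finset.sum_congr rfl
    intro S hS
    have hsub := (Finset.mem_powersetCard.1 hS).1
    rw [sort_concat_max (fun b hb => by have := Finset.mem_Icc.1 (hsub hb); omega)
      (fun hx => hnm (hsub hx)), List.map_append, List.prod_append]
    simp
  · rw [mm, if_neg (by omega), if_pos h, mm, if_neg (by omega),
      if_pos (by omega), mm, if_neg (by omega), if_neg (by omega)]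
    simp
  · rw [mm, if_neg (by omega), if_neg (by omega), mm, if_neg (by omega),
      if_neg (by omega), mm, if_neg (by omega), if_neg (by omega)]
    simp
end

section
variable {k A : Type*} [Field k] [Ring A] [Algebra k A]

/-- membership in the right ideal generated by `X l - a`, `1 ≤ l ≤ i`. -/
def memI (X : ℕ → A) (a : k) (i : ℕ) (y : A) : Prop :=
  ∃ g : ℕ → A, y = ∑ l ∈ Finset.Icc 1 i, (X l - algebraMap k A a) * g l

variable {X : ℕ → A} {a : k}

lemma memI_zero {i : ℕ} : memI X a i 0 :=
  ⟨0, by simp⟩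

lemma memI_add {i : ℕ} {y z : A} (hy : memI X a i y) (hz : memI X a i z) :
    memI X a i (y + z) := by
  obtain ⟨g, rfl⟩ := hy; obtain ⟨h, rfl⟩ := hz
  exact ⟨g + h, by rw [← Finset.sum_add_distrib]; simp [mul_add]⟩

lemma memI_mul_right {i : ℕ} {y : A} (hy : memI X a i y) (r : A) :
    memI X a i (y * r) := by
  obtain ⟨g, rfl⟩ := hy
  exact ⟨fun l => g l * r, by rw [Finset.sum_mul]; simp [mul_assoc]⟩

lemma memI_gen {i l : ℕ} (h1 : 1 ≤ l) (h2 : l ≤ i) (r : A) :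
    memI X a i ((X l - algebraMap k A a) * r) := by
  refine ⟨fun m => if m = l then r else 0, ?_⟩
  rw [Finset.sum_eq_single l]
  · simp
  · intro b _ hb; simp [hb]
  · intro h; exact absurd (Finset.mem_Icc.2 ⟨h1, h2⟩) h

lemma memI_commL {i : ℕ} {y z : A}
    (hz : ∀ l, 1 ≤ l → l ≤ i → Commute z (X l - algebraMap k A a))
    (hy : memI X a i y) : memI X a i (z * y) := by
  obtain ⟨g, rfl⟩ := hy
  refine ⟨fun l => z * g l, ?_⟩
  rw [Finset.mul_sum]
  refine Finset.sum_congr rfl fun l hl => ?_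
  obtain ⟨h1, h2⟩ := Finset.mem_Icc.1 hl
  rw [← mul_assoc, (hz l h1 h2).eq, mul_assoc]

lemma memI_mono {i i' : ℕ} (h : i ≤ i') {y : A} (hy : memI X a i y) : memI X a i' y := by
  obtain ⟨g, rfl⟩ := hy
  refine ⟨fun l => if l ≤ i then g l else 0, ?_⟩
  rw [← Finset.sum_subset (Finset.Icc_subset_Icc_right h)]
  · refine Finset.sum_congr rfl fun l hl => by
      simp [(Finset.mem_Icc.1 hl).2]
  · intro l _ hl
    simp only [Finset.mem_Icc, not_and, not_le] at hl
    have : ¬ l ≤ i := by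
      intro hc
      rcases Nat.lt_or_ge l 1 with h' | h'
      · interval_cases l <;> simp_all
      · exact absurd (hl h') (not_lt.2 hc)
    simp [this]

lemma memI_neg {i : ℕ} {y : A} (hy : memI X a i y) : memI X a i (-y) := by
  obtain ⟨g, rfl⟩ := hy
  exact ⟨fun l => -(g l), by simp [Finset.sum_neg_distrib, mul_neg]⟩

lemma memI_sub {i : ℕ} {y z : A} (hy : memI X a i y) (hz : memI X a i z) :
    memI X a i (y - z) := by
  rw [sub_eq_add_neg]; exact memI_add hy (memI_neg hz)

lemma memI_sum {i : ℕ} {s : Finset ℕ} {f : ℕ → A} (h : ∀ t ∈ s, memI X a i (f t)) :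
    memI X a i (∑ t ∈ s, f t) := by
  classical
  induction s using Finset.induction_on with
  | empty => simpa using memI_zero
  | insert _ _ hx ih =>
    rw [Finset.sum_insert hx]
    exact memI_add (h _ (Finset.mem_insert_self _ _))
      (ih fun t ht => h t (Finset.mem_insert_of_mem ht))
end

section
variable {k A : Type*} [Field k] [Ring A] [Algebra k A]
variable {q a : k} {n : ℕ} {T X : ℕ → A}

local notation "σ" => algebraMap k A

lemma hecke_sq (hquad : ∀ i, 1 ≤ i → i ≤ n - 1 → (T i + 1) * (T i - algebraMap k A q) = 0)
    {l : ℕ} (hl1 : 1 ≤ l) (hl2 : l ≤ n - 1) :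
    T l * T l = σ (q - 1) * T l + σ q := by
  have h := hquad l hl1 hl2
  have hc : T l * σ q = σ q * T l := (Algebra.commutes q (T l)).symm
  have e : (T l + 1) * (T l - σ q) = T l * T l - (σ (q-1) * T l + σ q) := by
    calc (T l + 1) * (T l - σ q) = T l * T l - T l * σ q + T l - σ q := by noncomm_ring
    _ = T l * T l - σ q * T l + T l - σ q := by rw [hc]
    _ = T l * T l - (σ (q - 1) * T l + σ q) := by rw [map_sub, map_one]; noncomm_ring
  rw [e] at h
  exact sub_eq_zero.1 h

lemma cancel_q (hq0 : q ≠ 0) {u v : A} (h : σ q * u = σ q * v) : u = v := by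
  have h2 := congrArg (σ q⁻¹ * ·) h
  simpa [← mul_assoc, ← map_mul, inv_mul_cancel₀ hq0] using h2

/-- `T_l X_l = X_{l+1} T_l - (q-1) X_{l+1}` (Hecke case). -/
lemma TX_lo (hq0 : q ≠ 0)
    (hquad : ∀ i, 1 ≤ i → i ≤ n - 1 → (T i + 1) * (T i - algebraMap k A q) = 0)
    {l : ℕ} (hTXT : T l * X l * T l = σ q * X (l + 1))
    (hl1 : 1 ≤ l) (hl2 : l ≤ n - 1) :
    T l * X l = X (l + 1) * T l - σ (q - 1) * X (l + 1) := by
  have hsq := hecke_sq hquad hl1 hl2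
  apply cancel_q hq0
  have h1 : T l * X l * (T l * T l) = σ q * X (l+1) * T l := by
    calc T l * X l * (T l * T l) = (T l * X l * T l) * T l := by noncomm_ring
    _ = σ q * X (l+1) * T l := by rw [hTXT]
  rw [hsq] at h1
  have h2 : T l * X l * (σ (q-1) * T l + σ q)
      = σ (q-1) * (σ q * X (l+1)) + σ q * (T l * X l) := by
    calc T l * X l * (σ (q-1) * T l + σ q)
        = (T l * X l * σ (q-1)) * T l + T l * X l * σ q := by noncomm_ring
    _ = (σ (q-1) * (T l * X l)) * T l + σ q * (T l * X l) := by
        rw [← Algebra.commutes (q-1) (T l * X l), ← Algebra.commutes q (T l * X l)]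
    _ = σ (q-1) * (T l * X l * T l) + σ q * (T l * X l) := by noncomm_ring
    _ = σ (q-1) * (σ q * X (l+1)) + σ q * (T l * X l) := by rw [hTXT]
  rw [h2] at h1
  have e : σ (q-1) * (σ q * X (l+1)) = σ q * (σ (q-1) * X (l+1)) := by
    rw [← mul_assoc, ← mul_assoc, ← map_mul, ← map_mul, mul_comm (q-1) q]
  rw [e] at h1
  have h3 := sub_eq_of_eq_add' h1.symm
  rw [← h3, mul_sub]
  noncomm_ring

/-- `T_l X_{l+1} = X_l T_l + (q-1) X_{l+1}` (Hecke case). -/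
lemma TX_hi (hq0 : q ≠ 0)
    (hquad : ∀ i, 1 ≤ i → i ≤ n - 1 → (T i + 1) * (T i - algebraMap k A q) = 0)
    {l : ℕ} (hTXT : T l * X l * T l = σ q * X (l + 1))
    (hl1 : 1 ≤ l) (hl2 : l ≤ n - 1) :
    T l * X (l + 1) = X l * T l + σ (q - 1) * X (l + 1) := by
  have hsq := hecke_sq hquad hl1 hl2
  apply cancel_q hq0
  have h1 : (T l * T l) * (X l * T l) = σ q * (T l * X (l+1)) := by
    calc (T l * T l) * (X l * T l) = T l * (T l * X l * T l) := by noncomm_ring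
    _ = T l * (σ q * X (l+1)) := by rw [hTXT]
    _ = (T l * σ q) * X (l+1) := by noncomm_ring
    _ = (σ q * T l) * X (l+1) := by rw [← Algebra.commutes q (T l)]
    _ = σ q * (T l * X (l+1)) := by noncomm_ring
  rw [hsq] at h1
  have h2 : (σ (q-1) * T l + σ q) * (X l * T l)
      = σ (q-1) * (σ q * X (l+1)) + σ q * (X l * T l) := by
    calc (σ (q-1) * T l + σ q) * (X l * T l)
        = σ (q-1) * (T l * X l * T l) + σ q * (X l * T l) := by noncomm_ring
    _ = σ (q-1) * (σ q * X (l+1)) + σ q * (X l * T l) := by rw [hTXT]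
  rw [h2] at h1
  rw [← h1, mul_add]
  have e : σ (q-1) * (σ q * X (l+1)) = σ q * (σ (q-1) * X (l+1)) := by
    rw [← mul_assoc, ← mul_assoc, ← map_mul, ← map_mul, mul_comm (q-1) q]
  rw [e]
  exact add_comm _ _
end

section
variable {k A : Type*} [Field k] [Ring A] [Algebra k A]
variable {q a : k} {n : ℕ} {T X : ℕ → A}

local notation "σ" => algebraMap k A


/-- unified: `T_l x_l = x_{l+1} T_l + α_l`. -/
lemma lemB (hq0 : q ≠ 0)
    (hquad : ∀ i, 1 ≤ i → i ≤ n - 1 → (T i + 1) * (T i - algebraMap k A q) = 0)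
    (hgen : q ≠ 1 → (∀ i, 1 ≤ i → i ≤ n → IsUnit (X i)) ∧
      (∀ i, 1 ≤ i → i ≤ n - 1 → T i * X i * T i = algebraMap k A q * X (i + 1)))
    (hdeg : q = 1 → ∀ i, 1 ≤ i → i ≤ n - 1 → X (i + 1) * T i = T i * X i + 1)
    {l : ℕ} (hl1 : 1 ≤ l) (hl2 : l ≤ n - 1) :
    T l * (X l - σ a) = (X (l+1) - σ a) * T l
      + (if q = 1 then (-1 : A) else σ (1 - q) * X (l + 1)) := by
  have hTa : T l * σ a = σ a * T l := (Algebra.commutes a (T l)).symm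
  rcases eq_or_ne q 1 with h1 | h1
  · -- degenerate
    have hT2 : T l * T l = 1 := by
      have := hecke_sq hquad hl1 hl2 (q := q)
      rw [h1] at this
      simpa using this
    have hXlT : T l * X l = X (l+1) * T l - 1 := by
      have h := hdeg h1 l hl1 hl2
      exact (sub_eq_of_eq_add h).symm
    rw [if_pos h1, mul_sub, hXlT, hTa]
    noncomm_ring
  · have hTXT := (hgen h1).2 l hl1 hl2
    have hXlT := TX_lo hq0 hquad hTXT hl1 hl2
    have e : σ (1 - q) = -σ (q - 1) := by
      rw [show (1 - q) = -(q-1) by ring, map_neg]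
    rw [if_neg h1, mul_sub, hXlT, hTa, e]
    noncomm_ring

/-- unified: `T_l x_{l+1} = x_l T_l + (q-1) x_{l+1} + γ`. -/
lemma lemA (hq0 : q ≠ 0)
    (hquad : ∀ i, 1 ≤ i → i ≤ n - 1 → (T i + 1) * (T i - algebraMap k A q) = 0)
    (hgen : q ≠ 1 → (∀ i, 1 ≤ i → i ≤ n → IsUnit (X i)) ∧
      (∀ i, 1 ≤ i → i ≤ n - 1 → T i * X i * T i = algebraMap k A q * X (i + 1)))
    (hdeg : q = 1 → ∀ i, 1 ≤ i → i ≤ n - 1 → X (i + 1) * T i = T i * X i + 1)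
    {l : ℕ} (hl1 : 1 ≤ l) (hl2 : l ≤ n - 1) :
    T l * (X (l+1) - σ a) = (X l - σ a) * T l
      + σ (q - 1) * (X (l+1) - σ a)
      + σ (if q = 1 then (1 : k) else (q - 1) * a) := by
  have hTa : T l * σ a = σ a * T l := (Algebra.commutes a (T l)).symm
  rcases eq_or_ne q 1 with h1 | h1
  · have hT2 : T l * T l = 1 := by
      have := hecke_sq hquad hl1 hl2 (q := q)
      rw [h1] at this
      simpa using this
    have hd := hdeg h1 l hl1 hl2
    have hXhT : T l * X (l+1) = X l * T l + 1 := by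
      calc T l * X (l+1) = T l * X (l+1) * (T l * T l) := by rw [hT2, mul_one]
      _ = T l * (X (l+1) * T l) * T l := by noncomm_ring
      _ = T l * (T l * X l + 1) * T l := by rw [hd]
      _ = (T l * T l) * (X l * T l) + T l * T l := by noncomm_ring
      _ = X l * T l + 1 := by rw [hT2]; noncomm_ring
    rw [if_pos h1, h1, mul_sub, hXhT, hTa]
    simp only [sub_self, map_zero, zero_mul, map_one]
    noncomm_ring
  · have hTXT := (hgen h1).2 l hl1 hl2
    have hXhT := TX_hi hq0 hquad hTXT hl1 hl2
    have e : σ ((q-1) * a) = σ (q-1) * σ a := map_mul σ _ _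
    rw [if_neg h1, mul_sub, hXhT, hTa, e]
    noncomm_ring
end

section
variable {k A : Type*} [Field k] [Ring A] [Algebra k A]
variable {q a : k} {n : ℕ} {T X : ℕ → A}

local notation "σ" => algebraMap k A

lemma comm_xa (hXX : ∀ i j, 1 ≤ i → i ≤ n → 1 ≤ j → j ≤ n → X i * X j = X j * X i)
    {m m' : ℕ} (h1 : 1 ≤ m) (h2 : m ≤ n) (h3 : 1 ≤ m') (h4 : m' ≤ n) :
    Commute (X m - σ a) (X m' - σ a) := by
  have c1 : Commute (X m) (X m') := hXX m m' h1 h2 h3 h4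
  have c2 : Commute (X m) (σ a) := (Algebra.commutes a (X m)).symm
  have c3 : Commute (σ a) (X m') := Algebra.commutes a (X m')
  exact (c1.sub_right c2).sub_left ((c3).sub_right (Commute.refl _))

lemma comm_xT (hXT : ∀ i j, 1 ≤ i → i ≤ n → 1 ≤ j → j ≤ n - 1 → i ≠ j → i ≠ j + 1 →
      X i * T j = T j * X i)
    {m l : ℕ} (h1 : 1 ≤ m) (h2 : m ≤ n) (h3 : 1 ≤ l) (h4 : l ≤ n - 1)
    (h5 : m ≠ l) (h6 : m ≠ l + 1) :
    Commute (X m - σ a) (T l) := by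
  have c1 : Commute (X m) (T l) := hXT m l h1 h2 h3 h4 h5 h6
  have c2 : Commute (σ a) (T l) := Algebra.commutes a (T l)
  exact c1.sub_left c2

lemma comm_alpha {l : ℕ} {z : A} (hz : Commute (X (l+1)) z) :
    Commute (if q = 1 then (-1 : A) else σ (1 - q) * X (l + 1)) z := by
  split
  · exact (Commute.one_left z).neg_left
  · exact Commute.mul_left (Algebra.commutes (1-q) z) hz

lemma lemB_pow (hq0 : q ≠ 0)
    (hquad : ∀ i, 1 ≤ i → i ≤ n - 1 → (T i + 1) * (T i - algebraMap k A q) = 0)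
    (hXX : ∀ i j, 1 ≤ i → i ≤ n → 1 ≤ j → j ≤ n → X i * X j = X j * X i)
    (hgen : q ≠ 1 → (∀ i, 1 ≤ i → i ≤ n → IsUnit (X i)) ∧
      (∀ i, 1 ≤ i → i ≤ n - 1 → T i * X i * T i = algebraMap k A q * X (i + 1)))
    (hdeg : q = 1 → ∀ i, 1 ≤ i → i ≤ n - 1 → X (i + 1) * T i = T i * X i + 1)
    {l : ℕ} (hl1 : 1 ≤ l) (hl2 : l ≤ n - 1) (hln : l + 1 ≤ n) (c : ℕ) :
    T l * (X l - σ a)^c = (X (l+1) - σ a)^c * T l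
      + (if q = 1 then (-1 : A) else σ (1 - q) * X (l + 1)) *
        ∑ t ∈ Finset.range c, (X (l+1) - σ a)^t * (X l - σ a)^(c-1-t) := by
  induction c with
  | zero => simp
  | succ c ih =>
    have hB := lemB (a := a) hq0 hquad hgen hdeg hl1 hl2
    have hαx' : Commute ((X (l+1) - σ a)^c)
        (if q = 1 then (-1 : A) else σ (1 - q) * X (l + 1)) := by
      refine (Commute.pow_left ?_ c)
      refine (comm_alpha ?_).symm
      have : Commute (X (l+1)) (X (l+1) - σ a) :=
        (Commute.refl _).sub_right ((Algebra.commutes a (X (l+1))).symm)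
      exact this
    have hSx : (∑ t ∈ Finset.range c, (X (l+1) - σ a)^t * (X l - σ a)^(c-1-t))
        * (X l - σ a)
        = ∑ t ∈ Finset.range c, (X (l+1) - σ a)^t * (X l - σ a)^(c-t) := by
      rw [Finset.sum_mul]
      refine Finset.sum_congr rfl fun t ht => ?_
      rw [mul_assoc, ← pow_succ, show c-1-t+1 = c-t by
        have := Finset.mem_range.1 ht; omega]
    calc T l * (X l - σ a)^(c+1)
        = (T l * (X l - σ a)^c) * (X l - σ a) := by rw [pow_succ, mul_assoc]
      _ = ((X (l+1) - σ a)^c * T l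
            + (if q = 1 then (-1 : A) else σ (1 - q) * X (l + 1)) *
              ∑ t ∈ Finset.range c, (X (l+1) - σ a)^t * (X l - σ a)^(c-1-t))
            * (X l - σ a) := by rw [ih]
      _ = (X (l+1) - σ a)^c * (T l * (X l - σ a))
            + (if q = 1 then (-1 : A) else σ (1 - q) * X (l + 1)) *
              ((∑ t ∈ Finset.range c, (X (l+1) - σ a)^t * (X l - σ a)^(c-1-t))
                * (X l - σ a)) := by noncomm_ring
      _ = (X (l+1) - σ a)^c * ((X (l+1) - σ a) * T l
            + (if q = 1 then (-1 : A) else σ (1 - q) * X (l + 1)))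
            + (if q = 1 then (-1 : A) else σ (1 - q) * X (l + 1)) *
              ∑ t ∈ Finset.range c, (X (l+1) - σ a)^t * (X l - σ a)^(c-t) := by
          rw [hB, hSx]
      _ = (X (l+1) - σ a)^(c+1) * T l
            + (if q = 1 then (-1 : A) else σ (1 - q) * X (l + 1)) *
              ((X (l+1) - σ a)^c
                + ∑ t ∈ Finset.range c, (X (l+1) - σ a)^t * (X l - σ a)^(c-t)) := by
          rw [mul_add, ← mul_assoc, ← pow_succ, hαx'.eq]
          noncomm_ring
      _ = (X (l+1) - σ a)^(c+1) * T l
            + (if q = 1 then (-1 : A) else σ (1 - q) * X (l + 1)) *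
              ∑ t ∈ Finset.range (c+1), (X (l+1) - σ a)^t * (X l - σ a)^(c+1-1-t) := by
          congr 1
          rw [Finset.sum_range_succ]
          simp only [Nat.add_sub_cancel, Nat.sub_self, pow_zero, mul_one]
          rw [add_comm ((X (l+1) - σ a)^c) _]

lemma lemA_pow (hq0 : q ≠ 0)
    (hquad : ∀ i, 1 ≤ i → i ≤ n - 1 → (T i + 1) * (T i - algebraMap k A q) = 0)
    (hgen : q ≠ 1 → (∀ i, 1 ≤ i → i ≤ n → IsUnit (X i)) ∧
      (∀ i, 1 ≤ i → i ≤ n - 1 → T i * X i * T i = algebraMap k A q * X (i + 1)))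
    (hdeg : q = 1 → ∀ i, 1 ≤ i → i ≤ n - 1 → X (i + 1) * T i = T i * X i + 1)
    {l : ℕ} (hl1 : 1 ≤ l) (hl2 : l ≤ n - 1) (m : ℕ) :
    T l * (X (l+1) - σ a)^m = (X l - σ a)^m * T l
      + ∑ t ∈ Finset.range m, (X l - σ a)^t *
          ((σ (q-1) * (X (l+1) - σ a) + σ (if q = 1 then (1:k) else (q-1)*a))
            * (X (l+1) - σ a)^(m-1-t)) := by
  induction m with
  | zero => simp
  | succ m ih =>
    have hA := lemA (a := a) hq0 hquad hgen hdeg hl1 hl2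
    have hSx : (∑ t ∈ Finset.range m, (X l - σ a)^t *
          ((σ (q-1) * (X (l+1) - σ a) + σ (if q = 1 then (1:k) else (q-1)*a))
            * (X (l+1) - σ a)^(m-1-t))) * (X (l+1) - σ a)
        = ∑ t ∈ Finset.range m, (X l - σ a)^t *
          ((σ (q-1) * (X (l+1) - σ a) + σ (if q = 1 then (1:k) else (q-1)*a))
            * (X (l+1) - σ a)^(m-t)) := by
      rw [Finset.sum_mul]
      refine Finset.sum_congr rfl fun t ht => ?_
      rw [mul_assoc, mul_assoc, ← pow_succ, show m-1-t+1 = m-t by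
        have := Finset.mem_range.1 ht; omega]
    calc T l * (X (l+1) - σ a)^(m+1)
        = (T l * (X (l+1) - σ a)^m) * (X (l+1) - σ a) := by rw [pow_succ, mul_assoc]
      _ = ((X l - σ a)^m * T l
            + ∑ t ∈ Finset.range m, (X l - σ a)^t *
              ((σ (q-1) * (X (l+1) - σ a) + σ (if q = 1 then (1:k) else (q-1)*a))
                * (X (l+1) - σ a)^(m-1-t))) * (X (l+1) - σ a) := by rw [ih]
      _ = (X l - σ a)^m * (T l * (X (l+1) - σ a))
            + (∑ t ∈ Finset.range m, (X l - σ a)^t *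
              ((σ (q-1) * (X (l+1) - σ a) + σ (if q = 1 then (1:k) else (q-1)*a))
                * (X (l+1) - σ a)^(m-1-t))) * (X (l+1) - σ a) := by noncomm_ring
      _ = (X l - σ a)^m * ((X l - σ a) * T l
            + σ (q-1) * (X (l+1) - σ a) + σ (if q = 1 then (1:k) else (q-1)*a))
            + ∑ t ∈ Finset.range m, (X l - σ a)^t *
              ((σ (q-1) * (X (l+1) - σ a) + σ (if q = 1 then (1:k) else (q-1)*a))
                * (X (l+1) - σ a)^(m-t)) := by rw [hA, hSx]
      _ = (X l - σ a)^(m+1) * T l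
            + ((X l - σ a)^m *
              ((σ (q-1) * (X (l+1) - σ a) + σ (if q = 1 then (1:k) else (q-1)*a))
                * (X (l+1) - σ a)^(m-m))
            + ∑ t ∈ Finset.range m, (X l - σ a)^t *
              ((σ (q-1) * (X (l+1) - σ a) + σ (if q = 1 then (1:k) else (q-1)*a))
                * (X (l+1) - σ a)^(m-t))) := by
          rw [Nat.sub_self, pow_zero, mul_one, pow_succ]
          noncomm_ring
      _ = (X l - σ a)^(m+1) * T l
            + ∑ t ∈ Finset.range (m+1), (X l - σ a)^t *
              ((σ (q-1) * (X (l+1) - σ a) + σ (if q = 1 then (1:k) else (q-1)*a))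
                * (X (l+1) - σ a)^(m+1-1-t)) := by
          congr 1
          rw [Finset.sum_range_succ]
          simp only [Nat.add_sub_cancel, Nat.sub_self, pow_zero, mul_one]
          rw [add_comm (∑ t ∈ Finset.range m, (X l - σ a)^t *
              ((σ (q-1) * (X (l+1) - σ a) + σ (if q = 1 then (1:k) else (q-1)*a))
                * (X (l+1) - σ a)^(m-t))) _]
end

section
variable {k A : Type*} [Field k] [Ring A] [Algebra k A]
variable {q a : k} {n : ℕ} {T X : ℕ → A}

local notation "σ" => algebraMap k A

lemma key (hq0 : q ≠ 0)
    (hquad : ∀ i, 1 ≤ i → i ≤ n - 1 → (T i + 1) * (T i - algebraMap k A q) = 0)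
    (hXT : ∀ i j, 1 ≤ i → i ≤ n → 1 ≤ j → j ≤ n - 1 → i ≠ j → i ≠ j + 1 →
      X i * T j = T j * X i)
    (hgen : q ≠ 1 → (∀ i, 1 ≤ i → i ≤ n → IsUnit (X i)) ∧
      (∀ i, 1 ≤ i → i ≤ n - 1 → T i * X i * T i = algebraMap k A q * X (i + 1)))
    (hdeg : q = 1 → ∀ i, 1 ≤ i → i ≤ n - 1 → X (i + 1) * T i = T i * X i + 1)
    (γ : k) (hγ : γ = if q = 1 then 1 else (q - 1) * a) :
    ∀ d j i m, 1 ≤ j → j ≤ i → i ≤ n → i - j = d →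
      memI X a i (((List.range' j (i - j)).map T).prod * (X i - σ a) ^ m
        - σ (γ ^ m) * mm T i j m) := by
  intro d
  induction d with
  | zero =>
    intro j i m hj hji hin hd
    obtain rfl : i = j := by omega
    rw [Nat.sub_self, List.range'_zero, List.map_nil, List.prod_nil, one_mul]
    rcases Nat.eq_zero_or_pos m with rfl | hm
    · have hmm : mm T i i 0 = 1 := by
        rw [mm, if_neg (by omega), if_pos (by omega)]
      rw [hmm, pow_zero, pow_zero, map_one, mul_one, sub_self]
      exact memI_zero
    · have hmm : mm T i i m = 0 := by
        rw [mm, if_neg (by omega), if_neg (by omega)]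
      rw [hmm, mul_zero, sub_zero, show m = (m-1)+1 by omega, pow_succ']
      exact memI_gen hj le_rfl _
  | succ d ih =>
    intro j i m hj hji hin hd
    have hji' : j + 1 ≤ i := by omega
    have hl : i - 1 + 1 = i := by omega
    rcases Nat.eq_zero_or_pos m with rfl | hm
    · rw [pow_zero, mul_one, pow_zero, map_one, one_mul, mm_zero T hji, sub_self]
      exact memI_zero
    obtain ⟨m', rfl⟩ : ∃ m', m = m' + 1 := ⟨m - 1, by omega⟩
    set x : A := X i - σ a with hx
    set x' : A := X (i-1) - σ a with hx'
    set Tp' : A := ((List.range' j (i - 1 - j)).map T).prod with hTp'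
    set β : A := σ (q-1) * x + σ (if q = 1 then (1:k) else (q-1)*a) with hβ
    have hxc : ∀ c : k, Commute x (σ c) := fun c => (Algebra.commutes c x).symm
    have hTp : ((List.range' j (i - j)).map T).prod = Tp' * T (i-1) := by
      rw [show i - j = (i-1-j) + 1 by omega, List.range'_concat, List.map_append,
        List.prod_append, show j + 1*(i-1-j) = i-1 by omega]
      simp
      rfl
    have hA := lemA_pow (a := a) hq0 hquad hgen hdeg
      (l := i-1) (by omega) (by omega) (m'+1)
    rw [hl, ← hx, ← hx', ← hβ] at hA
    have hr : ∀ t, memI X a (i-1) (Tp' * x' ^ t - σ (γ ^ t) * mm T (i-1) j t) :=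
      fun t => ih j (i-1) t hj (by omega) (by omega) (by omega)
    have E1 : ((List.range' j (i - j)).map T).prod * x ^ (m'+1)
        = (Tp' * x' ^ (m'+1)) * T (i-1)
          + ∑ t ∈ Finset.range (m'+1), (Tp' * x' ^ t) * (β * x ^ (m'+1-1-t)) := by
      rw [hTp, mul_assoc, hA, mul_add, Finset.mul_sum, ← mul_assoc]
      congr 1
      exact Finset.sum_congr rfl fun t _ => by rw [← mul_assoc]
    have hrec := mm_rec T hj hji' (by omega : 1 ≤ m'+1)
    simp only [Nat.add_sub_cancel] at hrec
    have hcx_mm : ∀ t, Commute x (mm T (i-1) j t) := by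
      intro t
      apply comm_mm
      intro l hl'
      have hb := Finset.mem_Icc.1 hl'
      exact comm_xT hXT (by omega) hin (by omega) (by omega) (by omega) (by omega)
    have hcx_β : Commute x β := by
      rw [hβ]
      exact Commute.add_right ((hxc (q-1)).mul_right (Commute.refl x)) (hxc _)
    have memC1 : memI X a i ((Tp' * x' ^ (m'+1) - σ (γ ^ (m'+1)) * mm T (i-1) j (m'+1))
        * T (i-1)) :=
      memI_mul_right (memI_mono (by omega) (hr (m'+1))) _
    have memC2 : memI X a i (∑ t ∈ Finset.range (m'+1),
        (Tp' * x' ^ t - σ (γ ^ t) * mm T (i-1) j t) * (β * x ^ (m'+1-1-t))) :=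
      memI_sum fun t _ => memI_mul_right (memI_mono (by omega) (hr t)) _
    have hgen' : ∀ (z : A), Commute x z → ∀ e, 1 ≤ e → memI X a i (z * x ^ e) := by
      intro z hz e he
      have : z * x ^ e = x * (x ^ (e-1) * z) := by
        calc z * x ^ e = x ^ e * z := ((hz.pow_left e).eq).symm
        _ = x * x ^ (e-1) * z := by
            conv_lhs => rw [show e = (e-1)+1 by omega, pow_succ']
        _ = x * (x ^ (e-1) * z) := by rw [mul_assoc]
      rw [this]
      exact memI_gen (by omega) le_rfl _
    have memC3 : memI X a i (∑ t ∈ Finset.range (m'+1),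
        (σ (γ ^ t) * mm T (i-1) j t) * (β * x ^ (m'+1-1-t))
        - σ (γ ^ (m'+1)) * mm T (i-1) j m') := by
      rw [Finset.sum_range_succ]
      have hlast : (σ (γ ^ m') * mm T (i-1) j m') * (β * x ^ (m'+1-1-m'))
          - σ (γ ^ (m'+1)) * mm T (i-1) j m'
          = (σ (γ ^ m') * mm T (i-1) j m' * σ (q-1)) * x := by
        rw [show m'+1-1-m' = 0 by omega, pow_zero, mul_one, hβ, mul_add]
        have e1 : σ (γ ^ m') * mm T (i-1) j m' * (σ (q-1) * x)
            = (σ (γ ^ m') * mm T (i-1) j m' * σ (q-1)) * x := by noncomm_ring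
        have e2 : σ (γ ^ m') * mm T (i-1) j m' * σ (if q = 1 then (1:k) else (q-1)*a)
            = σ (γ ^ (m'+1)) * mm T (i-1) j m' := by
          rw [mul_assoc, ← Algebra.commutes (if q = 1 then (1:k) else (q-1)*a)
            (mm T (i-1) j m'), ← mul_assoc, ← map_mul, ← hγ, ← pow_succ]
        rw [e1, e2]
        abel
      rw [add_sub_assoc, hlast]
      apply memI_add
      · apply memI_sum
        intro t ht
        have htm := Finset.mem_range.1 ht
        have hcz : Commute x (σ (γ ^ t) * mm T (i-1) j t * β) :=
          ((hxc _).mul_right (hcx_mm t)).mul_right hcx_β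
        have e3 : (σ (γ ^ t) * mm T (i-1) j t) * (β * x ^ (m'+1-1-t))
            = (σ (γ ^ t) * mm T (i-1) j t * β) * x ^ (m'+1-1-t) := by noncomm_ring
        rw [e3]
        exact hgen' _ hcz _ (by omega)
      · have hcz : Commute x (σ (γ ^ m') * mm T (i-1) j m' * σ (q-1)) :=
          ((hxc _).mul_right (hcx_mm m')).mul_right (hxc _)
        have := hgen' _ hcz 1 le_rfl
        rwa [pow_one] at this
    have Esum : (∑ t ∈ Finset.range (m'+1),
          (Tp' * x' ^ t - σ (γ ^ t) * mm T (i-1) j t) * (β * x ^ (m'+1-1-t)))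
        + ∑ t ∈ Finset.range (m'+1),
          (σ (γ ^ t) * mm T (i-1) j t) * (β * x ^ (m'+1-1-t))
        = ∑ t ∈ Finset.range (m'+1), (Tp' * x' ^ t) * (β * x ^ (m'+1-1-t)) := by
      rw [← Finset.sum_add_distrib]
      refine Finset.sum_congr rfl fun t _ => ?_
      rw [sub_mul]
      exact sub_add_cancel _ _
    have final_eq : ((List.range' j (i - j)).map T).prod * x ^ (m'+1)
        - σ (γ ^ (m'+1)) * mm T i j (m'+1)
        = (Tp' * x' ^ (m'+1) - σ (γ ^ (m'+1)) * mm T (i-1) j (m'+1)) * T (i-1)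
        + (∑ t ∈ Finset.range (m'+1),
            (Tp' * x' ^ t - σ (γ ^ t) * mm T (i-1) j t) * (β * x ^ (m'+1-1-t)))
        + (∑ t ∈ Finset.range (m'+1),
            (σ (γ ^ t) * mm T (i-1) j t) * (β * x ^ (m'+1-1-t))
          - σ (γ ^ (m'+1)) * mm T (i-1) j m') := by
      rw [E1, hrec, ← Esum, sub_mul, mul_add, ← mul_assoc]
      abel
    rw [final_eq]
    exact memI_add (memI_add memC1 memC2) memC3
end

/-- In the (degenerate) affine Hecke algebra `H_n(q)` — here
axiomatized by its generators and relations in an arbitrary `k`-algebra `A` — let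
`x_l = X_l - a`, `γ = (q-1)a` (resp. `1` if `q = 1`), and, for `1 ≤ j ≤ i < n`,
`c ≥ 1`, `e = min(c-1, i-j)` and `α = (1-q)(x_{i+1} + a)` (resp. `-1` if `q = 1`).
Then `T_j ⋯ T_i x_i^c - T_j ⋯ T_{i-1} x_{i+1}^c T_i - α ∑_{s=0}^{e} γ^s x_{i+1}^{c-s-1}
m_{ij}(s)` lies in the right ideal `𝔪_i H_n` generated by `x_1,…,x_i`. -/
theorem stmt19 (k : Type*) [Field k] (q a : k) (hq0 : q ≠ 0) (hqa : q ≠ 1 → a ≠ 0)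
    (n : ℕ) (A : Type*) [Ring A] [Algebra k A] (T X : ℕ → A)
    (hquad : ∀ i, 1 ≤ i → i ≤ n - 1 →
      (T i + 1) * (T i - algebraMap k A q) = 0)
    (hbraid : ∀ i, 1 ≤ i → i + 1 ≤ n - 1 →
      T i * T (i + 1) * T i = T (i + 1) * T i * T (i + 1))
    (hTT : ∀ i j, 1 ≤ i → i ≤ n - 1 → 1 ≤ j → j ≤ n - 1 → (i + 1 < j ∨ j + 1 < i) →
      T i * T j = T j * T i)
    (hXX : ∀ i j, 1 ≤ i → i ≤ n → 1 ≤ j → j ≤ n → X i * X j = X j * X i)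
    (hXT : ∀ i j, 1 ≤ i → i ≤ n → 1 ≤ j → j ≤ n - 1 → i ≠ j → i ≠ j + 1 →
      X i * T j = T j * X i)
    (hgen : q ≠ 1 → (∀ i, 1 ≤ i → i ≤ n → IsUnit (X i)) ∧
      (∀ i, 1 ≤ i → i ≤ n - 1 → T i * X i * T i = algebraMap k A q * X (i + 1)))
    (hdeg : q = 1 → ∀ i, 1 ≤ i → i ≤ n - 1 → X (i + 1) * T i = T i * X i + 1)
    (j i c : ℕ) (hj : 1 ≤ j) (hji : j ≤ i) (hin : i < n) (hc : 1 ≤ c) :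
    ∃ g : ℕ → A,
      (((List.range' j (i - j + 1)).map T).prod) * (X i - algebraMap k A a) ^ c -
        (((List.range' j (i - j)).map T).prod) * (X (i + 1) - algebraMap k A a) ^ c * T i -
        (if q = 1 then (-1 : A)
          else algebraMap k A (1 - q) * ((X (i + 1) - algebraMap k A a) + algebraMap k A a)) *
          ∑ s ∈ Finset.range (min (c - 1) (i - j) + 1),
            algebraMap k A ((if q = 1 then 1 else (q - 1) * a) ^ s) *
              (X (i + 1) - algebraMap k A a) ^ (c - s - 1) * mm T i j s =
      ∑ l ∈ Finset.Icc 1 i, (X l - algebraMap k A a) * g l := by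
  have hi1 : 1 ≤ i := le_trans hj hji
  have hn : i ≤ n - 1 := by omega
  have hn' : i + 1 ≤ n := by omega
  -- normalize α
  rw [sub_add_cancel]
  set γ : k := if q = 1 then 1 else (q - 1) * a with hγ
  set σa : A := algebraMap k A a with hσa
  set x : A := X i - σa with hx
  set x' : A := X (i + 1) - σa with hx'
  set α : A := if q = 1 then (-1 : A) else algebraMap k A (1 - q) * X (i + 1) with hα
  set Tp : A := ((List.range' j (i - j)).map T).prod with hTpdef
  -- T-product splitting
  have hTp : ((List.range' j (i - j + 1)).map T).prod = Tp * T i := by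
    rw [List.range'_concat, List.map_append, List.prod_append,
      show j + 1 * (i - j) = i by omega]
    simp
    rfl
  rw [hTp]
  -- lemB power formula at l = i
  have hB := lemB_pow (a := a) hq0 hquad hXX hgen hdeg (l := i) hi1 hn hn' c
  rw [← hσa, ← hx, ← hx', ← hα] at hB
  -- key lemma pieces
  have hK : ∀ m, memI X a i (Tp * x ^ m - algebraMap k A (γ ^ m) * mm T i j m) :=
    fun m => key hq0 hquad hXT hgen hdeg γ hγ (i - j) j i m hj hji (le_of_lt hin) rfl
  -- commutation facts
  have hcX'Tp : Commute (X (i + 1)) Tp := by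
    apply Commute.list_prod_right
    intro y hy
    obtain ⟨l, hl, rfl⟩ := List.mem_map.1 hy
    have hl' := List.mem_range'_1.1 hl
    exact (hXT (i+1) l (by omega) hn' (by omega) (by omega) (by omega) (by omega))
  have hσc : ∀ (c : k) (y : A), Commute (algebraMap k A c) y :=
    fun c y => Algebra.commutes c y
  have hcx'Tp : Commute x' Tp := by
    rw [hx', hσa]
    exact hcX'Tp.sub_left (hσc a Tp)
  have hcαTp : Commute α Tp := by
    rw [hα]
    split
    · exact (Commute.one_left Tp).neg_left
    · exact Commute.mul_left (hσc (1-q) Tp) hcX'Tp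
  have hcαx : ∀ l, 1 ≤ l → l ≤ i → Commute α (X l - σa) := by
    intro l h1 h2
    rw [hα, hσa]
    have hXl : Commute (X (i+1)) (X l - algebraMap k A a) :=
      Commute.sub_right (hXX (i+1) l (by omega) hn' h1 (by omega)) ((hσc a (X (i+1))).symm)
    split
    · exact (Commute.one_left _).neg_left
    · exact Commute.mul_left (hσc (1-q) _) hXl
  have hcx'x : ∀ l, 1 ≤ l → l ≤ i → Commute x' (X l - σa) := by
    intro l h1 h2
    rw [hx', hσa]
    exact comm_xa hXX (by omega) (by omega) h1 (by omega)
  -- hTpS : move Tp inside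
  have hTpS : Tp * (α * ∑ t ∈ Finset.range c, x' ^ t * x ^ (c - 1 - t))
      = α * ∑ t ∈ Finset.range c, x' ^ t * (Tp * x ^ (c - 1 - t)) := by
    rw [← mul_assoc, ← hcαTp.eq, mul_assoc, Finset.mul_sum]
    congr 1
    refine Finset.sum_congr rfl fun t _ => ?_
    rw [← mul_assoc, ← (hcx'Tp.pow_left t).eq, mul_assoc]
  -- split via key
  have hsplit : ∑ t ∈ Finset.range c, x' ^ t * (Tp * x ^ (c - 1 - t))
      = (∑ t ∈ Finset.range c,
          x' ^ t * (algebraMap k A (γ ^ (c-1-t)) * mm T i j (c-1-t)))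
        + ∑ t ∈ Finset.range c,
          x' ^ t * (Tp * x ^ (c-1-t) - algebraMap k A (γ ^ (c-1-t)) * mm T i j (c-1-t)) := by
    rw [← Finset.sum_add_distrib]
    refine Finset.sum_congr rfl fun t _ => ?_
    rw [← mul_add, add_sub_cancel]
  -- the vanishing of the difference of sums
  have hzero : ∑ t ∈ Finset.range c,
        x' ^ t * (algebraMap k A (γ ^ (c-1-t)) * mm T i j (c-1-t))
      = ∑ s ∈ Finset.range (min (c - 1) (i - j) + 1),
          algebraMap k A (γ ^ s) * x' ^ (c - s - 1) * mm T i j s := by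
    have step1 : ∑ t ∈ Finset.range c,
          x' ^ t * (algebraMap k A (γ ^ (c-1-t)) * mm T i j (c-1-t))
        = ∑ t ∈ Finset.range c,
          algebraMap k A (γ ^ (c-1-t)) * x' ^ (c-1-(c-1-t)) * mm T i j (c-1-t) := by
      refine Finset.sum_congr rfl fun t ht => ?_
      have htc := Finset.mem_range.1 ht
      rw [show c-1-(c-1-t) = t by omega, ← mul_assoc, ← ((hσc (γ ^ (c-1-t)) (x' ^ t))).eq]
    have step2 := Finset.sum_range_reflect
      (fun s => algebraMap k A (γ ^ s) * x' ^ (c - 1 - s) * mm T i j s) c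
    rw [step1, step2]
    have step3 : ∀ s, algebraMap k A (γ ^ s) * x' ^ (c - 1 - s) * mm T i j s
        = algebraMap k A (γ ^ s) * x' ^ (c - s - 1) * mm T i j s := by
      intro s
      rw [show c - 1 - s = c - s - 1 by omega]
    simp only [step3]
    refine (Finset.sum_subset (Finset.range_subset_range.2 (by omega)) ?_).symm
    intro s hs hs'
    have h1 := Finset.mem_range.1 hs
    have h2 : min (c-1) (i-j) + 1 ≤ s := by
      by_contra hcon
      exact hs' (Finset.mem_range.2 (by omega))
    have hmm : mm T i j s = 0 := by
      rw [mm, if_neg (by omega), if_neg (by omega)]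
    rw [hmm, mul_zero]
  -- the main equality
  have main_eq : Tp * T i * x ^ c - Tp * x' ^ c * T i
      - α * ∑ s ∈ Finset.range (min (c - 1) (i - j) + 1),
          algebraMap k A (γ ^ s) * x' ^ (c - s - 1) * mm T i j s
      = α * ∑ t ∈ Finset.range c,
          x' ^ t * (Tp * x ^ (c-1-t) - algebraMap k A (γ ^ (c-1-t)) * mm T i j (c-1-t)) := by
    calc Tp * T i * x ^ c - Tp * x' ^ c * T i
        - α * ∑ s ∈ Finset.range (min (c - 1) (i - j) + 1),
            algebraMap k A (γ ^ s) * x' ^ (c - s - 1) * mm T i j s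
        = Tp * (T i * x ^ c) - Tp * x' ^ c * T i
          - α * ∑ s ∈ Finset.range (min (c - 1) (i - j) + 1),
              algebraMap k A (γ ^ s) * x' ^ (c - s - 1) * mm T i j s := by
          rw [mul_assoc]
      _ = Tp * x' ^ c * T i + Tp * (α * ∑ t ∈ Finset.range c, x' ^ t * x ^ (c - 1 - t))
          - Tp * x' ^ c * T i
          - α * ∑ s ∈ Finset.range (min (c - 1) (i - j) + 1),
              algebraMap k A (γ ^ s) * x' ^ (c - s - 1) * mm T i j s := by
          rw [hB, mul_add, ← mul_assoc]
      _ = Tp * (α * ∑ t ∈ Finset.range c, x' ^ t * x ^ (c - 1 - t))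
          - α * ∑ s ∈ Finset.range (min (c - 1) (i - j) + 1),
              algebraMap k A (γ ^ s) * x' ^ (c - s - 1) * mm T i j s := by
          abel
      _ = α * ((∑ t ∈ Finset.range c,
              x' ^ t * (algebraMap k A (γ ^ (c-1-t)) * mm T i j (c-1-t)))
            + ∑ t ∈ Finset.range c,
              x' ^ t * (Tp * x ^ (c-1-t) - algebraMap k A (γ ^ (c-1-t)) * mm T i j (c-1-t)))
          - α * ∑ s ∈ Finset.range (min (c - 1) (i - j) + 1),
              algebraMap k A (γ ^ s) * x' ^ (c - s - 1) * mm T i j s := by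
          rw [hTpS, hsplit]
      _ = α * ∑ t ∈ Finset.range c,
            x' ^ t * (Tp * x ^ (c-1-t) - algebraMap k A (γ ^ (c-1-t)) * mm T i j (c-1-t)) := by
          rw [mul_add, hzero]
          abel
  rw [main_eq]
  have : memI X a i (α * ∑ t ∈ Finset.range c,
      x' ^ t * (Tp * x ^ (c-1-t) - algebraMap k A (γ ^ (c-1-t)) * mm T i j (c-1-t))) := by
    apply memI_commL hcαx
    apply memI_sum
    intro t _
    apply memI_commL (fun l h1 h2 => (hcx'x l h1 h2).pow_left t)
    exact hK (c-1-t)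
  exact this
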